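/- (Dominance of the compound-symmetric averaging.) Let T ≥ 1 and let m : Fin T → ℝ satisfy m_t = m_{(T−t) mod T} for all t. Set s = (∑_{t=0}^{T−1} m_t) − 1/2, and define m' : Fin T → ℝ by m'_0 = s/T + 1/2 and m'_t = s/T for t = 1, …, T−1. If m_0 − 1/2 + ∑_{t=1}^{T−1} m_t · cos(2π j t / T) ≥ 0 for every j = 1, …, T−1, then circ(m) − circ(m') is positive semidefinite. -/

import Mathlib

/-!
Write `d = m - m'`. Both matrices are circulant, so `circ m - circ m' = circ d` with `d` even. The
discrete Fourier transform on `ZMod T` diagonalises circulants: the quadratic form of `circ d` at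
`x` is `T⁻¹ ∑ₖ d̂ₖ |x̂ₖ|²`, and for even real `d` the eigenvalue `d̂ₖ` is
`∑ₜ dₜ cos (2πkt/T)`. The constant part `s/T` of `m'` only contributes to `d̂₀`, and `s` is chosen
so that `d̂₀ = ∑ₜ dₜ = 0`; for `k ≠ 0` the eigenvalue is `m̂ₖ - 1/2`, nonnegative by hypothesis.
-/

open Complex Finset Matrix ZMod

section
variable {N : ℕ} [NeZero N]

theorem re_stdAddChar_mul (a b : ZMod N) :
    (stdAddChar (a * b)).re = Real.cos (2 * Real.pi * a.val * b.val / N) := by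
  have hab : a * b = ((a.val * b.val : ℕ) : ZMod N) := by
    simp only [Nat.cast_mul, natCast_zmod_val]
  rw [hab, stdAddChar_apply, toCircle_natCast, ← exp_ofReal_mul_I_re]
  congr 2
  push_cast
  ring

theorem re_dft_ofReal (c : ZMod N → ℝ) (k : ZMod N) :
    (𝓕 (fun t => (c t : ℂ)) k).re = ∑ t, c t * Real.cos (2 * Real.pi * k.val * t.val / N) := by
  simp only [dft_apply, re_sum, smul_eq_mul, AddChar.map_neg_eq_conj, re_mul_ofReal, conj_re,
    mul_comm _ k, re_stdAddChar_mul]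
  exact sum_congr rfl fun t _ => mul_comm _ _

theorem dotProduct_circulant_mulVec_eq_sum_dft (c x : ZMod N → ℂ) :
    star x ⬝ᵥ circulant c *ᵥ x = (N : ℂ)⁻¹ * ∑ k, 𝓕 c k * normSq (𝓕 x k) := by
  have hc (s : ZMod N) : c s = (N : ℂ)⁻¹ * ∑ k, stdAddChar (k * s) * 𝓕 c k := by
    conv_lhs => rw [← dft.symm_apply_apply c]
    simp [invDFT_apply, smul_eq_mul]
  have hnorm (k : ZMod N) : (normSq (𝓕 x k) : ℂ) =
      ∑ i, ∑ j, stdAddChar (i * k) * star (x i) * (stdAddChar (-(j * k)) * x j) := by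
    rw [normSq_eq_conj_mul_self, dft_apply, map_sum, sum_mul_sum]
    simp [AddChar.map_neg_eq_conj, smul_eq_mul]
  have hchar (i j k : ZMod N) :
      stdAddChar (k * (i - j)) = stdAddChar (i * k) * stdAddChar (-(j * k)) := by
    rw [← AddChar.map_add_eq_mul]; ring_nf
  simp only [dotProduct, mulVec, circulant_apply, Pi.star_apply, hc, hnorm, hchar, mul_sum, sum_mul]
  refine (sum_congr rfl fun i _ => sum_comm).trans ?_
  rw [sum_comm]
  exact sum_congr rfl fun k _ => sum_congr rfl fun i _ => sum_congr rfl fun j _ => by ring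

theorem posSemidef_circulant_of_cos_sum_nonneg {c : ZMod N → ℝ} (heven : ∀ t, c (-t) = c t)
    (hcos : ∀ k : ZMod N, 0 ≤ ∑ t, c t * Real.cos (2 * Real.pi * k.val * t.val / N)) :
    (circulant c).PosSemidef := by
  refine .of_dotProduct_mulVec_nonneg (isHermitian_iff_isSymm.mpr
    (circulant_isSymm_iff.mpr heven)) fun x => ?_
  have hform := congrArg re
    (dotProduct_circulant_mulVec_eq_sum_dft (fun t => (c t : ℂ)) (fun t => (x t : ℂ)))
  have hlhs : star (fun t => (x t : ℂ)) ⬝ᵥ circulant (fun t => (c t : ℂ)) *ᵥ (fun t => (x t : ℂ))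
      = ((star x ⬝ᵥ circulant c *ᵥ x : ℝ) : ℂ) := by
    simp [dotProduct, mulVec, circulant_apply]
  rw [hlhs, ofReal_re, ← ofReal_natCast, ← ofReal_inv, re_ofReal_mul, re_sum] at hform
  simp only [re_mul_ofReal, re_dft_ofReal] at hform
  rw [hform]
  exact mul_nonneg (by positivity) (sum_nonneg fun k _ => mul_nonneg (hcos k) (normSq_nonneg _))

theorem sum_cos_eq_zero {k : ZMod N} (hk : k ≠ 0) :
    ∑ t : ZMod N, Real.cos (2 * Real.pi * k.val * t.val / N) = 0 := by
  have h := congrArg re (AddChar.sum_mulShift k (isPrimitive_stdAddChar N))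
  simpa [if_neg hk, re_sum, mul_comm _ k, re_stdAddChar_mul] using h

theorem sum_sub_ite_mul_cos (c : ZMod N → ℝ) (a b : ℝ) (k : ZMod N) :
    ∑ t, (c t - if t = 0 then a + b else a) * Real.cos (2 * Real.pi * k.val * t.val / N) =
      ∑ t, c t * Real.cos (2 * Real.pi * k.val * t.val / N) -
        a * ∑ t : ZMod N, Real.cos (2 * Real.pi * k.val * t.val / N) - b := by
  have hite (t : ZMod N) : (if t = 0 then a + b else a) = a + if t = 0 then b else 0 := by
    split_ifs <;> ring
  simp only [hite, sub_mul, add_mul, ite_mul, zero_mul, sum_sub_distrib, sum_add_distrib,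
    ← mul_sum, sum_ite_eq', mem_univ, if_true, val_zero, Nat.cast_zero, mul_zero, zero_div,
    Real.cos_zero, mul_one]
  ring

theorem posSemidef_circulant_sub_compoundSymm {m : ZMod N → ℝ} (hm : ∀ t, m (-t) = m t)
    (hcos : ∀ k : ZMod N, k ≠ 0 → 1 / 2 ≤ ∑ t, m t * Real.cos (2 * Real.pi * k.val * t.val / N)) :
    (circulant fun t => m t - if t = 0 then (∑ u, m u - 1 / 2) / N + 1 / 2
      else (∑ u, m u - 1 / 2) / N).PosSemidef := by
  refine posSemidef_circulant_of_cos_sum_nonneg (fun t => by simp only [hm, neg_eq_zero])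
    fun k => ?_
  rw [sum_sub_ite_mul_cos]
  rcases eq_or_ne k 0 with rfl | hk
  · simp [val_zero]
  · rw [sum_cos_eq_zero hk]
    linarith [hcos k hk]

end

theorem compound_symmetric_dominance (T : ℕ) (hT : 1 ≤ T) (m : Fin T → ℝ)
    (hm : ∀ t : Fin T, m t = m (-t))
    (hcos : ∀ j : Fin T, (j : ℕ) ≠ 0 →
      0 ≤ m ⟨0, hT⟩ - 1 / 2 +
        ∑ t ∈ Finset.univ.filter (fun t : Fin T => (t : ℕ) ≠ 0),
          m t * Real.cos (2 * Real.pi * (j : ℕ) * (t : ℕ) / T)) :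
    ((Matrix.of fun i j : Fin T => m (j - i)) -
      (Matrix.of fun i j : Fin T =>
        (fun t : Fin T => if (t : ℕ) = 0
            then ((∑ u : Fin T, m u) - 1 / 2) / T + 1 / 2
            else ((∑ u : Fin T, m u) - 1 / 2) / T) (j - i))).PosSemidef := by
  obtain ⟨n, rfl⟩ : ∃ n, T = n + 1 := ⟨T - 1, by omega⟩
  have hcos' (k : Fin (n + 1)) (hk : k ≠ 0) :
      1 / 2 ≤ ∑ t, m t * Real.cos (2 * Real.pi * k.val * t.val / (n + 1 : ℕ)) := by
    have h := hcos k (Fin.val_ne_zero_iff.mpr hk)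
    have herase : univ.filter (fun t : Fin (n + 1) => (t : ℕ) ≠ 0) = univ.erase 0 := by
      ext t
      simp
    rw [herase, Fin.zero_eta] at h
    rw [← add_sum_erase _ _ (mem_univ 0)]
    simpa [add_comm, sub_add_eq_add_sub] using h
  set a : ℝ := ((∑ u, m u) - 1 / 2) / (n + 1 : ℕ)
  have hmat : ((Matrix.of fun i j : Fin (n + 1) => m (j - i)) - Matrix.of fun i j =>
      (fun t : Fin (n + 1) => if (t : ℕ) = 0 then a + 1 / 2 else a) (j - i)) =
      circulant fun t => m t - if t = 0 then a + 1 / 2 else a := by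
    ext i j
    rw [circulant_apply, ← neg_sub j i]
    simp only [of_apply, Matrix.sub_apply, Fin.val_eq_zero_iff, ← hm, neg_eq_zero]
  rw [hmat]
  -- `ZMod (n + 1)` is `Fin (n + 1)` by definition.
  exact posSemidef_circulant_sub_compoundSymm (N := n + 1) (fun t => (hm t).symm) hcos'
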